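/- The Lie algebra L is not restrictable: the p-th power ad(D)^p (computed in End(L)) does not lie in ad(L), the image of the adjoint map ad : L → End(L). -/

import Mathlib

/-!
If `ad(D) ^ p = ad z`, compare both sides on the `x_i`. Since the `x_i` commute with each other and
`D_0` is central, `ad z` acts on them as `c • ad D`, where `c` is the `D`-coordinate of `z`. On the
eigenvector `x_1` this forces `c = 1`. But `ad D` maps `x_{k-1} ↦ x_k ↦ 0`, so `ad(D) ^ p` kills
`x_{k-1}` as `p ≥ 2`, whereas `ad z` sends it to `x_k ≠ 0`.
-/

universe u v w

open Module

/-- `b` is a basis of the Lie algebra `L` of the paper: `Sum.inl i ↦ x_{i+1}`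
(for `i : Fin k`), `Sum.inr 0 ↦ D_0`, `Sum.inr 1 ↦ D`, where `D_0` is central, the `x_i`
commute, `[D, x_i] = x_i` for `i = 1, …, k-2`, `[D, x_{k-1}] = x_k` and `[D, x_k] = 0`. -/
def IsLBasis {𝕜 : Type u} [Field 𝕜] {L : Type v} [LieRing L] [LieAlgebra 𝕜 L]
    {k : ℕ} (b : Basis (Fin k ⊕ Fin 2) 𝕜 L) : Prop :=
  (∀ i j : Fin k, ⁅b (Sum.inl i), b (Sum.inl j)⁆ = 0) ∧
  (∀ v : Fin k ⊕ Fin 2, ⁅b (Sum.inr 0), b v⁆ = 0) ∧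
  (∀ i : Fin k, (i : ℕ) < k - 2 → ⁅b (Sum.inr 1), b (Sum.inl i)⁆ = b (Sum.inl i)) ∧
  (∀ i j : Fin k, (i : ℕ) = k - 2 → (j : ℕ) = k - 1 →
      ⁅b (Sum.inr 1), b (Sum.inl i)⁆ = b (Sum.inl j)) ∧
  (∀ i : Fin k, (i : ℕ) = k - 1 → ⁅b (Sum.inr 1), b (Sum.inl i)⁆ = 0)

theorem Module.Basis.lie_eq_repr_smul_of_lie_eq_zero {ι R L : Type*} [Fintype ι] [CommRing R]
    [LieRing L] [LieAlgebra R L] (b : Basis ι R L) {x : L} (v₀ : ι)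
    (hx : ∀ v ≠ v₀, ⁅b v, x⁆ = 0) (z : L) : ⁅z, x⁆ = b.repr z v₀ • ⁅b v₀, x⁆ := by
  conv_lhs => rw [← b.sum_repr z]
  rw [sum_lie, Finset.sum_eq_single v₀ (fun v _ hv => by rw [smul_lie, hx v hv, smul_zero])
    (by simp), smul_lie]

theorem IsLBasis.lie_inl {𝕜 L : Type*} [Field 𝕜] [LieRing L] [LieAlgebra 𝕜 L] {k : ℕ}
    {b : Basis (Fin k ⊕ Fin 2) 𝕜 L} (hb : IsLBasis b) (z : L) (i : Fin k) :
    ⁅z, b (Sum.inl i)⁆ = b.repr z (Sum.inr 1) • ⁅b (Sum.inr 1), b (Sum.inl i)⁆ := by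
  refine b.lie_eq_repr_smul_of_lie_eq_zero (Sum.inr 1) (fun v hv => ?_) z
  rcases v with j | j
  · exact hb.1 j i
  · fin_cases j
    · exact hb.2.1 _
    · exact absurd rfl hv

theorem stmt18 (p k : ℕ) (hp : p.Prime) (hk : 3 ≤ k)
    (𝕜 : Type u) [Field 𝕜]
    (L : Type v) [LieRing L] [LieAlgebra 𝕜 L]
    (b : Basis (Fin k ⊕ Fin 2) 𝕜 L) (hb : IsLBasis b) :
    (LieAlgebra.ad 𝕜 L (b (Sum.inr 1))) ^ p ∉ Set.range (LieAlgebra.ad 𝕜 L) := by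
  rintro ⟨z, hz⟩
  set D := b (Sum.inr 1)
  have hz_apply (x : L) : ⁅z, x⁆ = (LieAlgebra.ad 𝕜 L D ^ p) x := by
    rw [← hz, LieAlgebra.ad_apply]
  have hfix : LieAlgebra.ad 𝕜 L D (b (Sum.inl ⟨0, by omega⟩)) = b (Sum.inl ⟨0, by omega⟩) :=
    hb.2.2.1 _ (by simp only; omega)
  have hc : b.repr z (Sum.inr 1) = 1 := by
    have h := hz_apply (b (Sum.inl ⟨0, by omega⟩))
    rw [hb.lie_inl, ← LieAlgebra.ad_apply (R := 𝕜), hfix, Module.End.pow_apply,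
      Function.iterate_fixed hfix] at h
    exact smul_left_injective 𝕜 (b.ne_zero _) (h.trans (one_smul 𝕜 _).symm)
  have hshift : ⁅D, b (Sum.inl ⟨k - 2, by omega⟩)⁆ = b (Sum.inl ⟨k - 1, by omega⟩) :=
    hb.2.2.2.1 _ _ rfl rfl
  have hkill : (LieAlgebra.ad 𝕜 L D ^ p) (b (Sum.inl ⟨k - 2, by omega⟩)) = 0 :=
    Module.End.pow_map_zero_of_le hp.two_le <| by
      rw [sq, Module.End.mul_apply, LieAlgebra.ad_apply, LieAlgebra.ad_apply, hshift,
        hb.2.2.2.2 _ rfl]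
  have h := hz_apply (b (Sum.inl ⟨k - 2, by omega⟩))
  rw [hb.lie_inl, hc, one_smul, hshift, hkill] at h
  exact b.ne_zero _ h
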